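/- For every η > 0 there exists a constant C = C(η, K, T, n, x₀) such that for all y = (y₁, …, yₙ) and y' = (y'₁, …, y'ₙ) in (ℝ^d)ⁿ with max_{1≤k≤n} |y_k| ≤ η and max_{1≤k≤n} |y'_k| ≤ η, one has ‖p_n(y) − p_n(y')‖_∞ ≤ C · max_{1≤k≤n} |y_k − y'_k|. -/

import Mathlib

open MeasureTheory

/-- Sup norm of a path over `[0, T]`. -/
noncomputable def supNorm (d : ℕ) (T : ℝ) (ω : ℝ → EuclideanSpace ℝ (Fin d)) : ℝ :=
  ⨆ u : Set.Icc (0 : ℝ) T, ‖ω u‖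

/-- Frobenius norm of a `d × d` real matrix. -/
noncomputable def frob (d : ℕ) (A : Matrix (Fin d) (Fin d) ℝ) : ℝ :=
  Real.sqrt (∑ i, ∑ j, (A i j) ^ 2)

/-- A matrix acting on a vector of `EuclideanSpace ℝ (Fin d)`. -/
noncomputable def matMulVec (d : ℕ) (A : Matrix (Fin d) (Fin d) ℝ)
    (v : EuclideanSpace ℝ (Fin d)) : EuclideanSpace ℝ (Fin d) :=
  (WithLp.equiv 2 (Fin d → ℝ)).symm (A.mulVec (WithLp.equiv 2 (Fin d → ℝ) v))

/-- The Lipschitz condition on the coefficients `b`, `σ` with respect to the distance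
`d((t,ω),(t',ω')) = ‖ω_t - ω'_{t'}‖_∞ + √|t - t'|`, required over bounded paths. -/
def LipschitzCoeffs (d : ℕ) (T K : ℝ)
    (b : ℝ → (ℝ → EuclideanSpace ℝ (Fin d)) → EuclideanSpace ℝ (Fin d))
    (σ : ℝ → (ℝ → EuclideanSpace ℝ (Fin d)) → Matrix (Fin d) (Fin d) ℝ) : Prop :=
  ∀ t ∈ Set.Icc (0 : ℝ) T, ∀ t' ∈ Set.Icc (0 : ℝ) T,
    ∀ ω ω' : ℝ → EuclideanSpace ℝ (Fin d),
    (∃ M, ∀ u ∈ Set.Icc (0 : ℝ) T, ‖ω u‖ ≤ M) →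
    (∃ M, ∀ u ∈ Set.Icc (0 : ℝ) T, ‖ω' u‖ ≤ M) →
    ‖b t ω - b t' ω'‖ + frob d (σ t ω - σ t' ω')
      ≤ K * (supNorm d T (fun u => ω (min t u) - ω' (min t' u)) + Real.sqrt |t - t'|)

/-- `p` is the piecewise constant Euler path for the coefficients `b, σ`, initial value `x₀`,
time horizon `T`, `n` steps and increments `y`: there are points `x_j` with `x_0 = x₀`,
`x_{j+1} = x_j + b(t_j, p_{t_j}) δ + σ(t_j, p_{t_j}) y_{j+1}` where `t_j = j (T/n)` and
`p_{t_j}` is the path `p` stopped at `t_j`, and `p(s) = x_j` on `[t_j, t_{j+1})`, `p(T) = x_n`. -/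
def IsEulerPath (d n : ℕ) (T : ℝ) (x₀ : EuclideanSpace ℝ (Fin d))
    (b : ℝ → (ℝ → EuclideanSpace ℝ (Fin d)) → EuclideanSpace ℝ (Fin d))
    (σ : ℝ → (ℝ → EuclideanSpace ℝ (Fin d)) → Matrix (Fin d) (Fin d) ℝ)
    (y : Fin n → EuclideanSpace ℝ (Fin d)) (p : ℝ → EuclideanSpace ℝ (Fin d)) : Prop :=
  ∃ x : ℕ → EuclideanSpace ℝ (Fin d),
    x 0 = x₀ ∧
    (∀ j : Fin n, x ((j : ℕ) + 1)
        = x (j : ℕ)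
          + (T / n) • b (((j : ℕ) : ℝ) * (T / n)) (fun u => p (min (((j : ℕ) : ℝ) * (T / n)) u))
          + matMulVec d
              (σ (((j : ℕ) : ℝ) * (T / n)) (fun u => p (min (((j : ℕ) : ℝ) * (T / n)) u))) (y j)) ∧
    (∀ j : Fin n, ∀ s ∈ Set.Ico (((j : ℕ) : ℝ) * (T / n)) ((((j : ℕ) : ℝ) + 1) * (T / n)),
        p s = x (j : ℕ)) ∧
    p T = x n

/-!
Comparing the coefficients at `(t, p_t)` with those at the constant path `x₀` at time `0`, the
Lipschitz condition gives the linear growth `|b| + ‖σ‖ ≤ C₀ + K (max_{i ≤ j} |x_i| + |x₀| + √T)`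
along an Euler path up to step `j`. Each Euler step therefore multiplies the running maximum of
the nodes by at most `1 + (δ + η) K` and adds a constant, and a discrete Grönwall argument bounds
all Euler paths with increments of size at most `η` by a common `R`. For two such paths the
Lipschitz condition at equal times bounds the coefficient differences at step `j` by
`K max_{i ≤ j} |x_i - x'_i|`, while `‖σ‖ ≤ S` along the second path by the bound `R`; so the
node differences obey the same recursion with additive term `S max_k |y_k - y'_k|`, and
Grönwall again gives the constant `C = n S (1 + (δ + η) K)^n`.
-/

attribute [local instance] Matrix.frobeniusSeminormedAddCommGroup

open Set

theorem frob_eq_norm (d : ℕ) (A : Matrix (Fin d) (Fin d) ℝ) : frob d A = ‖A‖ := by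
  simp only [frob, Matrix.frobenius_norm_def, Real.norm_eq_abs, Real.rpow_two, sq_abs,
    Real.sqrt_eq_rpow]

theorem frob_nonneg (d : ℕ) (A : Matrix (Fin d) (Fin d) ℝ) : 0 ≤ frob d A :=
  Real.sqrt_nonneg _

open Matrix in
theorem norm_matMulVec_le (d : ℕ) (A : Matrix (Fin d) (Fin d) ℝ)
    (v : EuclideanSpace ℝ (Fin d)) : ‖matMulVec d A v‖ ≤ frob d A * ‖v‖ :=
  calc ‖matMulVec d A v‖ = ‖replicateCol (Fin 1) (A *ᵥ v.ofLp)‖ :=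
        (frobenius_norm_replicateCol _).symm
    _ = ‖A * replicateCol (Fin 1) v.ofLp‖ := by rw [replicateCol_mulVec]
    _ ≤ ‖A‖ * ‖replicateCol (Fin 1) v.ofLp‖ := frobenius_norm_mul _ _
    _ = frob d A * ‖v‖ := by
        rw [frob_eq_norm]; exact congrArg (‖A‖ * ·) (frobenius_norm_replicateCol _)

theorem matMulVec_sub_matMulVec (d : ℕ) (A B : Matrix (Fin d) (Fin d) ℝ)
    (v w : EuclideanSpace ℝ (Fin d)) :
    matMulVec d A v - matMulVec d B w = matMulVec d (A - B) v + matMulVec d B (v - w) := by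
  change Matrix.toLpLin 2 2 A v - Matrix.toLpLin 2 2 B w
    = Matrix.toLpLin 2 2 (A - B) v + Matrix.toLpLin 2 2 B (v - w)
  simp only [map_sub, LinearMap.sub_apply]
  abel

section EulerIncrement

variable {d : ℕ} {δ : ℝ} (z z' β β' w w' : EuclideanSpace ℝ (Fin d))
  (A A' : Matrix (Fin d) (Fin d) ℝ)

theorem norm_euler_increment_le (hδ : 0 ≤ δ) :
    ‖z + δ • β + matMulVec d A w‖ ≤ ‖z‖ + (δ + ‖w‖) * (‖β‖ + frob d A) := by
  have hA := norm_matMulVec_le d A w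
  have hwβ : 0 ≤ ‖w‖ * ‖β‖ := by positivity
  have hδA : 0 ≤ δ * frob d A := mul_nonneg hδ (frob_nonneg d A)
  calc ‖z + δ • β + matMulVec d A w‖ ≤ ‖z‖ + ‖δ • β‖ + ‖matMulVec d A w‖ := norm_add₃_le
    _ ≤ ‖z‖ + (δ + ‖w‖) * (‖β‖ + frob d A) := by
        rw [norm_smul, Real.norm_of_nonneg hδ]; linarith

theorem euler_increment_sub :
    (z + δ • β + matMulVec d A w) - (z' + δ • β' + matMulVec d A' w')
      = ((z - z') + δ • (β - β') + matMulVec d (A - A') w) + matMulVec d A' (w - w') := by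
  rw [smul_sub, add_assoc _ (matMulVec d (A - A') w), ← matMulVec_sub_matMulVec]
  abel

end EulerIncrement

theorem discrete_gronwall_running_max {u : ℕ → ℝ} {L c : ℝ} {n : ℕ} (hL : 0 ≤ L) (hc : 0 ≤ c)
    (hu₀ : 0 ≤ u 0) (hstep : ∀ j < n, ∀ v, (∀ i ≤ j, u i ≤ v) → u (j + 1) ≤ (1 + L) * v + c) :
    ∀ i ≤ n, u i ≤ (u 0 + n * c) * (1 + L) ^ n := by
  suffices key : ∀ j ≤ n, ∀ i ≤ j, u i ≤ (u 0 + j * c) * (1 + L) ^ j from key n le_rfl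
  intro j
  induction j with
  | zero =>
    intro _ i hi
    obtain rfl := Nat.le_zero.mp hi
    simp
  | succ j ih =>
    intro hj i hi
    have hprev := ih (by omega)
    have hpow : 1 ≤ (1 + L) ^ (j + 1) := one_le_pow₀ (by linarith)
    have hmono : (u 0 + j * c) * (1 + L) ^ j ≤ (u 0 + (j + 1 : ℕ) * c) * (1 + L) ^ (j + 1) := by
      gcongr
      · linarith
      · linarith
      · omega
    rcases Nat.lt_or_ge i (j + 1) with hij | hij
    · exact (hprev i (by omega)).trans hmono
    obtain rfl : i = j + 1 := by omega
    calc u (j + 1) ≤ (1 + L) * ((u 0 + j * c) * (1 + L) ^ j) + c := hstep j (by omega) _ hprev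
      _ ≤ (u 0 + j * c) * (1 + L) ^ (j + 1) + c * (1 + L) ^ (j + 1) := by
        have := le_mul_of_one_le_right hc hpow
        rw [pow_succ] at this ⊢
        linarith
      _ = (u 0 + (j + 1 : ℕ) * c) * (1 + L) ^ (j + 1) := by push_cast; ring

theorem natCast_mul_div_le {T : ℝ} (hT : 0 ≤ T) {j n : ℕ} (hj : j ≤ n) : (j : ℝ) * (T / n) ≤ T := by
  rcases Nat.eq_zero_or_pos n with rfl | hn
  · simp [hT]
  rw [mul_div_left_comm]
  exact mul_le_of_le_one_right hT (div_le_one_of_le₀ (by exact_mod_cast hj) (Nat.cast_nonneg n))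

section StepPath

variable {E : Type*} {n : ℕ} {T : ℝ}

def IsStepPath (n : ℕ) (T : ℝ) (x : ℕ → E) (p : ℝ → E) : Prop :=
  (∀ j : Fin n, ∀ s ∈ Ico (((j : ℕ) : ℝ) * (T / n)) ((((j : ℕ) : ℝ) + 1) * (T / n)),
    p s = x (j : ℕ)) ∧ p T = x n

namespace IsStepPath

variable {x x' : ℕ → E} {p p' : ℝ → E}

theorem exists_node_eq (hp : IsStepPath n T x p) (hn : 0 < n) {s : ℝ} (hs : s ∈ Icc 0 T) :
    ∃ i ≤ n, p s = x i := by
  rcases hs.2.eq_or_lt with rfl | hsT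
  · exact ⟨n, le_rfl, hp.2⟩
  have hδ : 0 < T / n := div_pos (hs.1.trans_lt hsT) (by exact_mod_cast hn)
  have hi : ⌊s / (T / n)⌋₊ < n := by
    rwa [Nat.floor_lt (div_nonneg hs.1 hδ.le), div_lt_iff₀ hδ, mul_div_cancel₀ _ (by positivity)]
  refine ⟨_, hi.le, hp.1 ⟨_, hi⟩ s ⟨?_, ?_⟩⟩
  · exact (le_div_iff₀ hδ).1 (Nat.floor_le (div_nonneg hs.1 hδ.le))
  · exact (div_lt_iff₀ hδ).1 (Nat.lt_floor_add_one _)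

theorem stopped (hp : IsStepPath n T x p) (hn : 0 < n) (hT : 0 < T) {j : ℕ} (hj : j ≤ n) :
    IsStepPath n T (fun i => x (min i j)) (fun u => p (min ((j : ℝ) * (T / n)) u)) := by
  have hδ : 0 < T / n := div_pos hT (by exact_mod_cast hn)
  have hnode : p (j * (T / n)) = x j := by
    rcases hj.lt_or_eq with hj | rfl
    · exact hp.1 ⟨j, hj⟩ _ ⟨le_rfl, by linarith⟩
    · rw [mul_div_cancel₀ _ (by positivity), hp.2]
  refine ⟨fun i s hs => ?_, ?_⟩
  · rcases le_or_gt j i with hji | hij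
    · have : (j : ℝ) * (T / n) ≤ s := le_trans (by gcongr) hs.1
      simp only [min_eq_right hji, min_eq_left this, hnode]
    · have : s ≤ (j : ℝ) * (T / n) :=
        hs.2.le.trans (by gcongr; exact_mod_cast Nat.succ_le_of_lt hij)
      simp only [min_eq_left hij.le, min_eq_right this, hp.1 i s hs]
  · simp only [min_eq_right hj, min_eq_left (natCast_mul_div_le hT.le hj), hnode]

theorem sub [AddGroup E] (hp : IsStepPath n T x p) (hp' : IsStepPath n T x' p') :
    IsStepPath n T (fun i => x i - x' i) (fun s => p s - p' s) :=
  ⟨fun j s hs => congrArg₂ (· - ·) (hp.1 j s hs) (hp'.1 j s hs), congrArg₂ (· - ·) hp.2 hp'.2⟩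

variable [SeminormedAddGroup E]

theorem norm_le (hp : IsStepPath n T x p) (hn : 0 < n) {v : ℝ} (hv : ∀ i ≤ n, ‖x i‖ ≤ v)
    {s : ℝ} (hs : s ∈ Icc 0 T) : ‖p s‖ ≤ v := by
  obtain ⟨i, hi, hpi⟩ := hp.exists_node_eq hn hs
  exact hpi ▸ hv i hi

theorem norm_stopped_le (hp : IsStepPath n T x p) (hn : 0 < n) (hT : 0 < T) {j : ℕ} (hj : j ≤ n)
    {v : ℝ} (hv : ∀ i ≤ j, ‖x i‖ ≤ v) : ∀ u ∈ Icc 0 T, ‖p (min ((j : ℝ) * (T / n)) u)‖ ≤ v :=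
  fun _ => (hp.stopped hn hT hj).norm_le hn fun i _ => hv _ (min_le_right i j)

theorem exists_bound_stopped (hp : IsStepPath n T x p) (hn : 0 < n) (hT : 0 < T) {j : ℕ}
    (hj : j ≤ n) : ∃ M, ∀ u ∈ Icc 0 T, ‖p (min ((j : ℝ) * (T / n)) u)‖ ≤ M :=
  ⟨∑ i ∈ Finset.range (j + 1), ‖x i‖, hp.norm_stopped_le hn hT hj fun _ hi =>
    Finset.single_le_sum (f := fun i => ‖x i‖) (fun _ _ => norm_nonneg _)
      (Finset.mem_range_succ_iff.2 hi)⟩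

end IsStepPath

end StepPath

theorem supNorm_le {d : ℕ} {T : ℝ} (hT : 0 ≤ T) {ω : ℝ → EuclideanSpace ℝ (Fin d)} {v : ℝ}
    (h : ∀ u ∈ Icc 0 T, ‖ω u‖ ≤ v) : supNorm d T ω ≤ v :=
  haveI : Nonempty (Icc 0 T) := ⟨⟨0, le_rfl, hT⟩⟩
  ciSup_le fun u => h u u.2

noncomputable def coeffNorm (d : ℕ)
    (b : ℝ → (ℝ → EuclideanSpace ℝ (Fin d)) → EuclideanSpace ℝ (Fin d))
    (σ : ℝ → (ℝ → EuclideanSpace ℝ (Fin d)) → Matrix (Fin d) (Fin d) ℝ) (t : ℝ)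
    (ω : ℝ → EuclideanSpace ℝ (Fin d)) : ℝ :=
  ‖b t ω‖ + frob d (σ t ω)

theorem coeffNorm_nonneg (d : ℕ)
    (b : ℝ → (ℝ → EuclideanSpace ℝ (Fin d)) → EuclideanSpace ℝ (Fin d))
    (σ : ℝ → (ℝ → EuclideanSpace ℝ (Fin d)) → Matrix (Fin d) (Fin d) ℝ) (t : ℝ)
    (ω : ℝ → EuclideanSpace ℝ (Fin d)) : 0 ≤ coeffNorm d b σ t ω :=
  add_nonneg (norm_nonneg _) (frob_nonneg _ _)

section Euler

variable {d n : ℕ} {T K : ℝ} {x₀ : EuclideanSpace ℝ (Fin d)}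
  {b : ℝ → (ℝ → EuclideanSpace ℝ (Fin d)) → EuclideanSpace ℝ (Fin d)}
  {σ : ℝ → (ℝ → EuclideanSpace ℝ (Fin d)) → Matrix (Fin d) (Fin d) ℝ}
  {x x' : ℕ → EuclideanSpace ℝ (Fin d)} {p p' : ℝ → EuclideanSpace ℝ (Fin d)}

theorem LipschitzCoeffs.coeffNorm_stopped_le (hLip : LipschitzCoeffs d T K b σ) (hK : 0 ≤ K)
    (x₀ : EuclideanSpace ℝ (Fin d)) {t : ℝ} (ht : t ∈ Icc 0 T) {R : ℝ}
    (hR : ∀ u ∈ Icc 0 T, ‖p (min t u)‖ ≤ R) :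
    coeffNorm d b σ t (fun u => p (min t u))
      ≤ coeffNorm d b σ 0 (fun _ => x₀) + K * (R + ‖x₀‖ + √T) := by
  have hT : 0 ≤ T := ht.1.trans ht.2
  have hLip₀ : ‖b t (fun u => p (min t u)) - b 0 (fun _ => x₀)‖
      + frob d (σ t (fun u => p (min t u)) - σ 0 (fun _ => x₀)) ≤ K * (R + ‖x₀‖ + √T) := by
    refine (hLip t ht 0 ⟨le_rfl, hT⟩ _ _ ⟨R, hR⟩ ⟨‖x₀‖, fun _ _ => le_rfl⟩).trans ?_
    gcongr K * (?_ + ?_)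
    · refine supNorm_le hT fun u hu => ?_
      rw [← min_assoc, min_self]
      exact (norm_sub_le _ _).trans (by linarith [hR u hu])
    · rw [sub_zero, abs_of_nonneg ht.1]
      exact Real.sqrt_le_sqrt ht.2
  have hb := norm_le_norm_sub_add (b t fun u => p (min t u)) (b 0 fun _ => x₀)
  have hσ := norm_le_norm_sub_add (σ t fun u => p (min t u)) (σ 0 fun _ => x₀)
  rw [← frob_eq_norm, ← frob_eq_norm, ← frob_eq_norm] at hσ
  unfold coeffNorm
  linarith

theorem norm_node_succ_le (hLip : LipschitzCoeffs d T K b σ) (hK : 0 ≤ K) (hn : 0 < n)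
    (hT : 0 < T) (hp : IsStepPath n T x p) {j : ℕ} (hj : j < n) {w : EuclideanSpace ℝ (Fin d)}
    (hrec : x (j + 1) = x j + (T / n) • b (j * (T / n)) (fun u => p (min (j * (T / n)) u))
      + matMulVec d (σ (j * (T / n)) (fun u => p (min (j * (T / n)) u))) w)
    {η v : ℝ} (hw : ‖w‖ ≤ η) (hv : ∀ i ≤ j, ‖x i‖ ≤ v) :
    ‖x (j + 1)‖ ≤ (1 + (T / n + η) * K) * v
      + (T / n + η) * (coeffNorm d b σ 0 (fun _ => x₀) + K * (‖x₀‖ + √T)) := by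
  have hδ : 0 ≤ T / n := by positivity
  have hη : 0 ≤ η := (norm_nonneg w).trans hw
  have ht : (j : ℝ) * (T / n) ∈ Icc 0 T := ⟨by positivity, natCast_mul_div_le hT.le hj.le⟩
  have hcoeff := hLip.coeffNorm_stopped_le hK x₀ ht (hp.norm_stopped_le hn hT hj.le hv)
  rw [hrec]
  calc _ ≤ ‖x j‖ + (T / n + ‖w‖) * coeffNorm d b σ _ (fun u => p (min (j * (T / n)) u)) :=
        norm_euler_increment_le _ _ _ _ hδ
    _ ≤ v + (T / n + η) * (coeffNorm d b σ 0 (fun _ => x₀) + K * (v + ‖x₀‖ + √T)) := by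
        gcongr
        · exact hv j le_rfl
        · exact coeffNorm_nonneg _ _ _ _ _
    _ = _ := by ring

theorem exists_bound_of_isEulerPath (hLip : LipschitzCoeffs d T K b σ) (hK : 0 ≤ K)
    (hn : 0 < n) (hT : 0 < T) {η : ℝ} (hη : 0 ≤ η) :
    ∃ R, ∀ y p, IsEulerPath d n T x₀ b σ y p → (∀ k, ‖y k‖ ≤ η) → ∀ s ∈ Icc 0 T, ‖p s‖ ≤ R := by
  set c := (T / n + η) * (coeffNorm d b σ 0 (fun _ => x₀) + K * (‖x₀‖ + √T))
  have hc : 0 ≤ c := by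
    have := coeffNorm_nonneg d b σ 0 (fun _ => x₀)
    positivity
  refine ⟨(‖x₀‖ + n * c) * (1 + (T / n + η) * K) ^ n,
    fun y p ⟨x, hx₀, hrec, hval, hpT⟩ hy s hs => ?_⟩
  have hp : IsStepPath n T x p := ⟨hval, hpT⟩
  have hnodes := discrete_gronwall_running_max (u := fun i => ‖x i‖) (by positivity) hc
    (norm_nonneg _) fun j hj v hv => norm_node_succ_le hLip hK hn hT hp hj (hrec ⟨j, hj⟩) (hy _) hv
  rw [hx₀] at hnodes
  exact hp.norm_le hn hnodes hs

theorem norm_node_sub_succ_le (hLip : LipschitzCoeffs d T K b σ) (hK : 0 ≤ K) (hn : 0 < n)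
    (hT : 0 < T) (hp : IsStepPath n T x p) (hp' : IsStepPath n T x' p') {j : ℕ} (hj : j < n)
    {w w' : EuclideanSpace ℝ (Fin d)}
    (hrec : x (j + 1) = x j + (T / n) • b (j * (T / n)) (fun u => p (min (j * (T / n)) u))
      + matMulVec d (σ (j * (T / n)) (fun u => p (min (j * (T / n)) u))) w)
    (hrec' : x' (j + 1) = x' j + (T / n) • b (j * (T / n)) (fun u => p' (min (j * (T / n)) u))
      + matMulVec d (σ (j * (T / n)) (fun u => p' (min (j * (T / n)) u))) w')
    {η S v : ℝ} (hw : ‖w‖ ≤ η)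
    (hS : frob d (σ (j * (T / n)) (fun u => p' (min (j * (T / n)) u))) ≤ S)
    (hv : ∀ i ≤ j, ‖x i - x' i‖ ≤ v) :
    ‖x (j + 1) - x' (j + 1)‖ ≤ (1 + (T / n + η) * K) * v + S * ‖w - w'‖ := by
  set t : ℝ := j * (T / n)
  have hδ : 0 ≤ T / n := by positivity
  have hη : 0 ≤ η := (norm_nonneg w).trans hw
  have ht : t ∈ Icc 0 T := ⟨by positivity, natCast_mul_div_le hT.le hj.le⟩
  have hcoeff : ‖b t (fun u => p (min t u)) - b t (fun u => p' (min t u))‖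
      + frob d (σ t (fun u => p (min t u)) - σ t (fun u => p' (min t u))) ≤ K * v := by
    refine (hLip t ht t ht _ _ (hp.exists_bound_stopped hn hT hj.le)
      (hp'.exists_bound_stopped hn hT hj.le)).trans ?_
    rw [sub_self, abs_zero, Real.sqrt_zero, add_zero]
    gcongr
    refine supNorm_le hT.le fun u hu => ?_
    rw [← min_assoc, min_self]
    exact (hp.sub hp').norm_stopped_le hn hT hj.le hv u hu
  rw [hrec, hrec', euler_increment_sub]
  refine (norm_add_le _ _).trans <|
    (add_le_add (norm_euler_increment_le _ _ _ _ hδ) (norm_matMulVec_le _ _ _)).trans ?_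
  calc _ ≤ v + (T / n + η) * (K * v) + S * ‖w - w'‖ := by
        gcongr
        · exact hv j le_rfl
        · exact add_nonneg (norm_nonneg _) (frob_nonneg _ _)
    _ = _ := by ring

end Euler

theorem local_lipschitz_of_euler_path_general
    (d n : ℕ) (hn : 1 ≤ n) (T : ℝ) (hT : 0 < T)
    (x₀ : EuclideanSpace ℝ (Fin d))
    (b : ℝ → (ℝ → EuclideanSpace ℝ (Fin d)) → EuclideanSpace ℝ (Fin d))
    (σ : ℝ → (ℝ → EuclideanSpace ℝ (Fin d)) → Matrix (Fin d) (Fin d) ℝ)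
    (K : ℝ) (hK : 0 < K) (hLip : LipschitzCoeffs d T K b σ)
    (p : (Fin n → EuclideanSpace ℝ (Fin d)) → ℝ → EuclideanSpace ℝ (Fin d))
    (hp : ∀ y, IsEulerPath d n T x₀ b σ y (p y)) :
    ∀ η : ℝ, 0 < η → ∃ C : ℝ,
      ∀ y y' : Fin n → EuclideanSpace ℝ (Fin d),
        (∀ k, ‖y k‖ ≤ η) → (∀ k, ‖y' k‖ ≤ η) →
        supNorm d T (fun u => p y u - p y' u) ≤ C * ⨆ k, ‖y k - y' k‖ := by
  intro η hη
  obtain ⟨R, hR⟩ := exists_bound_of_isEulerPath (x₀ := x₀) hLip hK.le hn hT hη.le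
  set S := coeffNorm d b σ 0 (fun _ => x₀) + K * (R + ‖x₀‖ + √T)
  refine ⟨n * S * (1 + (T / n + η) * K) ^ n, fun y y' hy hy' => ?_⟩
  obtain ⟨x, hx₀, hrec, hval, hpT⟩ := hp y
  obtain ⟨x', hx₀', hrec', hval', hpT'⟩ := hp y'
  have hx : IsStepPath n T x (p y) := ⟨hval, hpT⟩
  have hx' : IsStepPath n T x' (p y') := ⟨hval', hpT'⟩
  set ε := ⨆ k, ‖y k - y' k‖
  have hε : ∀ k, ‖y k - y' k‖ ≤ ε := le_ciSup (Set.finite_range _).bddAbove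
  have hS : ∀ j < n, frob d (σ (j * (T / n)) (fun u => p y' (min (j * (T / n)) u))) ≤ S :=
    fun j hj => (le_add_of_nonneg_left (norm_nonneg _)).trans <|
      hLip.coeffNorm_stopped_le hK.le x₀ ⟨by positivity, natCast_mul_div_le hT.le hj.le⟩
        fun u hu => hR y' _ (hp y') hy' _
          ⟨le_min (by positivity) hu.1, (min_le_right _ _).trans hu.2⟩
  have hS₀ : 0 ≤ S := (frob_nonneg _ _).trans (hS 0 hn)
  have hSε : 0 ≤ S * ε := mul_nonneg hS₀ ((norm_nonneg _).trans (hε ⟨0, hn⟩))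
  have hnodes := discrete_gronwall_running_max (u := fun i => ‖x i - x' i‖)
    (L := (T / n + η) * K) (by positivity) hSε
    (norm_nonneg _) fun j hj v hv => (norm_node_sub_succ_le hLip hK.le hn hT hx hx' hj
      (hrec ⟨j, hj⟩) (hrec' ⟨j, hj⟩) (hy _) (hS j hj) hv).trans (by gcongr; exact hε _)
  refine supNorm_le hT.le fun u hu => ((hx.sub hx').norm_le hn hnodes hu).trans_eq ?_
  simp only [hx₀, hx₀', sub_self, norm_zero, zero_add]
  ring

/-- For every `η > 0` there is a constant `C = C(η, K, T, n, x₀)` such that whenever all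
increments `y_k`, `y'_k` have norm at most `η`,
`‖p_n(y) − p_n(y')‖_∞ ≤ C · max_k |y_k − y'_k|`. -/
theorem local_lipschitz_of_euler_path
    (d n : ℕ) (hd : 1 ≤ d) (hn : 1 ≤ n) (T : ℝ) (hT : 0 < T)
    (x₀ : EuclideanSpace ℝ (Fin d))
    (b : ℝ → (ℝ → EuclideanSpace ℝ (Fin d)) → EuclideanSpace ℝ (Fin d))
    (σ : ℝ → (ℝ → EuclideanSpace ℝ (Fin d)) → Matrix (Fin d) (Fin d) ℝ)
    (K : ℝ) (hK : 0 < K) (hLip : LipschitzCoeffs d T K b σ)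
    (p : (Fin n → EuclideanSpace ℝ (Fin d)) → ℝ → EuclideanSpace ℝ (Fin d))
    (hp : ∀ y, IsEulerPath d n T x₀ b σ y (p y)) :
    ∀ η : ℝ, 0 < η → ∃ C : ℝ,
      ∀ y y' : Fin n → EuclideanSpace ℝ (Fin d),
        (∀ k, ‖y k‖ ≤ η) → (∀ k, ‖y' k‖ ≤ η) →
        supNorm d T (fun u => p y u - p y' u) ≤ C * ⨆ k, ‖y k - y' k‖ :=
  local_lipschitz_of_euler_path_general d n hn T hT x₀ b σ K hK hLip p hp
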